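/- Let $c > 0$ and let $f_0, f_1 : \mathbb{S}^1 \times [0,T] \to \mathbb{R}$ be smooth functions (trigonometric polynomials in $x$ suffice) satisfying $\partial_t f_0 + \frac{1}{c}\Lambda f_0 = 0$ and $c^2\,\partial_t f_1 + 2c\,\partial_t f_0\, f_0 + c\,\Lambda f_1 + f_0\,\Lambda f_0 - Hf_0\,\partial_x f_0 = 0$. Then for every $\varepsilon$, the function $f = \varepsilon f_0 + \varepsilon^2 f_1$ satisfies $\partial_t f + \frac{1}{c}\Lambda f - \frac{1}{c^2}\partial_x(Hf\cdot f) = -\frac{\varepsilon^3}{c^2}\,\partial_x\left(Hf_0\cdot f_1 + Hf_1\cdot f_0 + \varepsilon\, Hf_1\cdot f_1\right)$; in particular the residual $\partial_t f + \frac{1}{c}\Lambda f - \frac{1}{c^2}\partial_x(Hf\cdot f)$ is $O(\varepsilon^3)$ as $\varepsilon \to 0$. -/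

import Mathlib

open MeasureTheory Real Filter Topology

noncomputable section

/-- The `n`-th Fourier coefficient of a `2π`-periodic function `u : ℝ → ℝ`. -/
def fc (u : ℝ → ℝ) (n : ℤ) : ℂ :=
  (1 / (2 * π)) • ∫ x in (0:ℝ)..(2 * π), (u x : ℂ) * Complex.exp (-Complex.I * n * x)

end

noncomputable section

/-- The periodic Hilbert transform, as the Fourier multiplier with symbol `-i sgn(n)`. -/
def Hop (u : ℝ → ℝ) (x : ℝ) : ℝ :=
  (∑' n : ℤ, (-Complex.I) * (Int.sign n : ℂ) * fc u n * Complex.exp (Complex.I * n * x)).re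

/-- `Λ = H∂ₓ`, the Fourier multiplier with symbol `|n|`. -/
def Lam (u : ℝ → ℝ) (x : ℝ) : ℝ :=
  (∑' n : ℤ, ((|(n : ℝ)| : ℝ) : ℂ) * fc u n * Complex.exp (Complex.I * n * x)).re

/-- The Wiener norm `‖u‖_{A^s} = ∑ |n|^s |û(n)|`. -/
def Anorm (s : ℝ) (u : ℝ → ℝ) : ℝ :=
  ∑' n : ℤ, |(n : ℝ)| ^ s * ‖fc u n‖

end

lemma fc_lin (a b : ℝ) (u v : ℝ → ℝ) (hu : Continuous u) (hv : Continuous v) (n : ℤ) :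
    fc (fun y => a * u y + b * v y) n = (a : ℂ) * fc u n + (b : ℂ) * fc v n := by
  unfold fc
  have hiu : IntervalIntegrable (fun x : ℝ => (u x : ℂ) * Complex.exp (-Complex.I * n * x))
      volume 0 (2*π) := by
    apply Continuous.intervalIntegrable; fun_prop
  have hiv : IntervalIntegrable (fun x : ℝ => (v x : ℂ) * Complex.exp (-Complex.I * n * x))
      volume 0 (2*π) := by
    apply Continuous.intervalIntegrable; fun_prop
  have h1 : (fun x : ℝ => ((a * u x + b * v x : ℝ) : ℂ) * Complex.exp (-Complex.I * n * x))
      = fun x : ℝ => (a : ℂ) * ((u x : ℂ) * Complex.exp (-Complex.I * n * x))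
        + (b : ℂ) * ((v x : ℂ) * Complex.exp (-Complex.I * n * x)) := by
    funext x; push_cast; ring
  rw [h1, intervalIntegral.integral_add (hiu.const_mul _) (hiv.const_mul _),
    intervalIntegral.integral_const_mul, intervalIntegral.integral_const_mul]
  rw [Complex.real_smul, Complex.real_smul, Complex.real_smul]
  ring

lemma notmem_abs {N : ℕ} {n : ℤ} (h : n ∉ Finset.Icc (-(N:ℤ)) (N:ℤ)) : (N:ℤ) < |n| := by
  rw [Finset.mem_Icc] at h
  rcases abs_cases n with ⟨h1,h2⟩|⟨h1,h2⟩ <;> omega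

lemma Hop_eq_sum (N : ℕ) (u : ℝ → ℝ) (hu : ∀ n : ℤ, (N:ℤ) < |n| → fc u n = 0) (x : ℝ) :
    Hop u x = (∑ n ∈ Finset.Icc (-(N:ℤ)) (N:ℤ),
      (-Complex.I) * (Int.sign n : ℂ) * fc u n * Complex.exp (Complex.I * n * x)).re := by
  unfold Hop
  congr 1
  exact tsum_eq_sum (fun n hn => by rw [hu n (notmem_abs hn)]; ring)

lemma Lam_eq_sum (N : ℕ) (u : ℝ → ℝ) (hu : ∀ n : ℤ, (N:ℤ) < |n| → fc u n = 0) (x : ℝ) :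
    Lam u x = (∑ n ∈ Finset.Icc (-(N:ℤ)) (N:ℤ),
      ((|(n : ℝ)| : ℝ) : ℂ) * fc u n * Complex.exp (Complex.I * n * x)).re := by
  unfold Lam
  congr 1
  exact tsum_eq_sum (fun n hn => by rw [hu n (notmem_abs hn)]; ring)

lemma my_sign_mul (n : ℤ) : ((Int.sign n : ℂ)) * n = ((|(n:ℝ)| : ℝ) : ℂ) := by
  rcases lt_trichotomy n 0 with h|h|h
  · rw [Int.sign_eq_neg_one_of_neg h, abs_of_neg (show (n:ℝ) < 0 by exact_mod_cast h)]
    push_cast; ring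
  · simp [h]
  · rw [Int.sign_eq_one_of_pos h, abs_of_pos (show (0:ℝ) < (n:ℝ) by exact_mod_cast h)]
    push_cast; ring

lemma exp_hasDerivAt (n : ℤ) (x : ℝ) :
    HasDerivAt (fun y : ℝ => Complex.exp (Complex.I * n * y))
      (Complex.I * n * Complex.exp (Complex.I * n * x)) x := by
  have h2 : HasDerivAt (fun y : ℝ => Complex.I * n * (y:ℂ)) (Complex.I * n) x := by
    simpa using Complex.ofRealCLM.hasDerivAt.const_mul (Complex.I * (n:ℂ))
  simpa [mul_comm] using h2.cexp

lemma hop_hasDerivAt (N : ℕ) (u : ℝ → ℝ) (hu : ∀ n : ℤ, (N:ℤ) < |n| → fc u n = 0) (x : ℝ) :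
    HasDerivAt (Hop u) (Lam u x) x := by
  have hHop : Hop u = fun y : ℝ => (∑ n ∈ Finset.Icc (-(N:ℤ)) (N:ℤ),
      (-Complex.I) * (Int.sign n : ℂ) * fc u n * Complex.exp (Complex.I * n * y)).re :=
    funext fun y => Hop_eq_sum N u hu y
  rw [hHop, Lam_eq_sum N u hu x]
  have key : HasDerivAt (fun y : ℝ => ∑ n ∈ Finset.Icc (-(N:ℤ)) (N:ℤ),
      (-Complex.I) * (Int.sign n : ℂ) * fc u n * Complex.exp (Complex.I * n * y))
      (∑ n ∈ Finset.Icc (-(N:ℤ)) (N:ℤ),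
      ((|(n : ℝ)| : ℝ) : ℂ) * fc u n * Complex.exp (Complex.I * n * x)) x := by
    apply HasDerivAt.fun_sum
    intro n _
    have h := (exp_hasDerivAt n x).const_mul ((-Complex.I) * (Int.sign n : ℂ) * fc u n)
    have e : (-Complex.I) * (Int.sign n : ℂ) * fc u n
          * (Complex.I * n * Complex.exp (Complex.I * n * x))
        = ((|(n : ℝ)| : ℝ) : ℂ) * fc u n * Complex.exp (Complex.I * n * x) := by
      rw [← my_sign_mul n]; ring_nf; rw [Complex.I_sq]; ring
    rw [e] at h
    exact h
  exact Complex.reCLM.hasFDerivAt.comp_hasDerivAt x key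

lemma fc_lin_bound (N : ℕ) (a b : ℝ) (u v : ℝ → ℝ) (hcu : Continuous u) (hcv : Continuous v)
    (hu : ∀ n : ℤ, (N:ℤ) < |n| → fc u n = 0) (hv : ∀ n : ℤ, (N:ℤ) < |n| → fc v n = 0) :
    ∀ n : ℤ, (N:ℤ) < |n| → fc (fun y => a * u y + b * v y) n = 0 := by
  intro n hn
  rw [fc_lin a b u v hcu hcv, hu n hn, hv n hn]; ring

lemma Hop_lin (N : ℕ) (a b : ℝ) (u v : ℝ → ℝ) (hcu : Continuous u) (hcv : Continuous v)
    (hu : ∀ n : ℤ, (N:ℤ) < |n| → fc u n = 0) (hv : ∀ n : ℤ, (N:ℤ) < |n| → fc v n = 0) (x : ℝ) :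
    Hop (fun y => a * u y + b * v y) x = a * Hop u x + b * Hop v x := by
  rw [Hop_eq_sum N _ (fc_lin_bound N a b u v hcu hcv hu hv) x, Hop_eq_sum N u hu x,
    Hop_eq_sum N v hv x]
  have : (∑ n ∈ Finset.Icc (-(N:ℤ)) (N:ℤ),
      (-Complex.I) * (Int.sign n : ℂ) * fc (fun y => a * u y + b * v y) n
        * Complex.exp (Complex.I * n * x))
      = (a:ℂ) * (∑ n ∈ Finset.Icc (-(N:ℤ)) (N:ℤ),
          (-Complex.I) * (Int.sign n : ℂ) * fc u n * Complex.exp (Complex.I * n * x))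
        + (b:ℂ) * (∑ n ∈ Finset.Icc (-(N:ℤ)) (N:ℤ),
          (-Complex.I) * (Int.sign n : ℂ) * fc v n * Complex.exp (Complex.I * n * x)) := by
    rw [Finset.mul_sum, Finset.mul_sum, ← Finset.sum_add_distrib]
    refine Finset.sum_congr rfl fun n _ => ?_
    rw [fc_lin a b u v hcu hcv]; ring
  rw [this, Complex.add_re, Complex.re_ofReal_mul, Complex.re_ofReal_mul]

lemma Lam_lin (N : ℕ) (a b : ℝ) (u v : ℝ → ℝ) (hcu : Continuous u) (hcv : Continuous v)
    (hu : ∀ n : ℤ, (N:ℤ) < |n| → fc u n = 0) (hv : ∀ n : ℤ, (N:ℤ) < |n| → fc v n = 0) (x : ℝ) :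
    Lam (fun y => a * u y + b * v y) x = a * Lam u x + b * Lam v x := by
  rw [Lam_eq_sum N _ (fc_lin_bound N a b u v hcu hcv hu hv) x, Lam_eq_sum N u hu x,
    Lam_eq_sum N v hv x]
  have : (∑ n ∈ Finset.Icc (-(N:ℤ)) (N:ℤ),
      ((|(n : ℝ)| : ℝ) : ℂ) * fc (fun y => a * u y + b * v y) n
        * Complex.exp (Complex.I * n * x))
      = (a:ℂ) * (∑ n ∈ Finset.Icc (-(N:ℤ)) (N:ℤ),
          ((|(n : ℝ)| : ℝ) : ℂ) * fc u n * Complex.exp (Complex.I * n * x))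
        + (b:ℂ) * (∑ n ∈ Finset.Icc (-(N:ℤ)) (N:ℤ),
          ((|(n : ℝ)| : ℝ) : ℂ) * fc v n * Complex.exp (Complex.I * n * x)) := by
    rw [Finset.mul_sum, Finset.mul_sum, ← Finset.sum_add_distrib]
    refine Finset.sum_congr rfl fun n _ => ?_
    rw [fc_lin a b u v hcu hcv]; ring
  rw [this, Complex.add_re, Complex.re_ofReal_mul, Complex.re_ofReal_mul]


/-- **Link with the CCCF model.** If `f₀` solves `∂ₜf₀ + (1/c)Λf₀ = 0` and `f₁` solves
`c²∂ₜf₁ + 2c ∂ₜf₀ f₀ + cΛf₁ + f₀Λf₀ - Hf₀ ∂ₓf₀ = 0`, then `f = εf₀ + ε²f₁` satisfies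
`∂ₜf + (1/c)Λf - (1/c²)∂ₓ(Hf·f) = -(ε³/c²)∂ₓ(Hf₀·f₁ + Hf₁·f₀ + ε Hf₁·f₁)`,
so the residual is `O(ε³)`. -/
theorem link_with_CCCF_model (c : ℝ) (hc : 0 < c) (f₀ f₁ : ℝ → ℝ → ℝ)
    (hreg₀ : ContDiff ℝ (⊤ : ℕ∞) (fun p : ℝ × ℝ => f₀ p.1 p.2))
    (hreg₁ : ContDiff ℝ (⊤ : ℕ∞) (fun p : ℝ × ℝ => f₁ p.1 p.2))
    (hper₀ : ∀ t : ℝ, Function.Periodic (f₀ t) (2 * π))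
    (hper₁ : ∀ t : ℝ, Function.Periodic (f₁ t) (2 * π))
    (hfin : ∃ N : ℕ, ∀ t : ℝ, ∀ n : ℤ, (N : ℤ) < |n| → fc (f₀ t) n = 0 ∧ fc (f₁ t) n = 0)
    (h₀ : ∀ t x : ℝ, deriv (fun s => f₀ s x) t + (1 / c) * Lam (f₀ t) x = 0)
    (h₁ : ∀ t x : ℝ,
      c ^ 2 * deriv (fun s => f₁ s x) t + 2 * c * deriv (fun s => f₀ s x) t * f₀ t x
        + c * Lam (f₁ t) x + f₀ t x * Lam (f₀ t) x - Hop (f₀ t) x * deriv (f₀ t) x = 0) :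
    ∀ ε t x : ℝ,
      deriv (fun s => ε * f₀ s x + ε ^ 2 * f₁ s x) t
        + (1 / c) * Lam (fun y => ε * f₀ t y + ε ^ 2 * f₁ t y) x
        - (1 / c ^ 2) *
            deriv (fun y =>
              Hop (fun z => ε * f₀ t z + ε ^ 2 * f₁ t z) y * (ε * f₀ t y + ε ^ 2 * f₁ t y)) x
      = -(ε ^ 3 / c ^ 2) *
          deriv (fun y =>
            Hop (f₀ t) y * f₁ t y + Hop (f₁ t) y * f₀ t y + ε * (Hop (f₁ t) y * f₁ t y)) x := by

  obtain ⟨N, hN⟩ := hfin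
  intro ε t x
  have hcne : c ≠ 0 := ne_of_gt hc
  -- continuity in space
  have hc0 : Continuous (f₀ t) := hreg₀.continuous.comp (Continuous.prodMk_right t)
  have hc1 : Continuous (f₁ t) := hreg₁.continuous.comp (Continuous.prodMk_right t)
  -- differentiability in space
  have hd0x : HasDerivAt (f₀ t) (deriv (f₀ t) x) x := by
    have h1 : DifferentiableAt ℝ (fun p : ℝ × ℝ => f₀ p.1 p.2) (t, x) :=
      (hreg₀.differentiable (by simp)) _
    have h2 : DifferentiableAt ℝ (fun y : ℝ => ((t, y) : ℝ × ℝ)) x :=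
      (differentiableAt_const t).prodMk differentiableAt_id
    exact (h1.comp x h2).hasDerivAt
  have hd1x : HasDerivAt (f₁ t) (deriv (f₁ t) x) x := by
    have h1 : DifferentiableAt ℝ (fun p : ℝ × ℝ => f₁ p.1 p.2) (t, x) :=
      (hreg₁.differentiable (by simp)) _
    have h2 : DifferentiableAt ℝ (fun y : ℝ => ((t, y) : ℝ × ℝ)) x :=
      (differentiableAt_const t).prodMk differentiableAt_id
    exact (h1.comp x h2).hasDerivAt
  -- differentiability in time
  have hd0t : HasDerivAt (fun s => f₀ s x) (deriv (fun s => f₀ s x) t) t := by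
    have h1 : DifferentiableAt ℝ (fun p : ℝ × ℝ => f₀ p.1 p.2) (t, x) :=
      (hreg₀.differentiable (by simp)) _
    have h2 : DifferentiableAt ℝ (fun s : ℝ => ((s, x) : ℝ × ℝ)) t :=
      differentiableAt_id.prodMk (differentiableAt_const x)
    exact (h1.comp t h2).hasDerivAt
  have hd1t : HasDerivAt (fun s => f₁ s x) (deriv (fun s => f₁ s x) t) t := by
    have h1 : DifferentiableAt ℝ (fun p : ℝ × ℝ => f₁ p.1 p.2) (t, x) :=
      (hreg₁.differentiable (by simp)) _
    have h2 : DifferentiableAt ℝ (fun s : ℝ => ((s, x) : ℝ × ℝ)) t :=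
      differentiableAt_id.prodMk (differentiableAt_const x)
    exact (h1.comp t h2).hasDerivAt
  -- Fourier support bounds
  have hb0 : ∀ n : ℤ, (N:ℤ) < |n| → fc (f₀ t) n = 0 := fun n hn => (hN t n hn).1
  have hb1 : ∀ n : ℤ, (N:ℤ) < |n| → fc (f₁ t) n = 0 := fun n hn => (hN t n hn).2
  have hbu : ∀ n : ℤ, (N:ℤ) < |n| → fc (fun y => ε * f₀ t y + ε ^ 2 * f₁ t y) n = 0 :=
    fc_lin_bound N ε (ε^2) (f₀ t) (f₁ t) hc0 hc1 hb0 hb1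
  -- time derivative of the combination
  have hT : deriv (fun s => ε * f₀ s x + ε ^ 2 * f₁ s x) t
      = ε * deriv (fun s => f₀ s x) t + ε ^ 2 * deriv (fun s => f₁ s x) t :=
    ((hd0t.const_mul ε).add (hd1t.const_mul (ε^2))).deriv
  -- Lam of the combination
  have hL : Lam (fun y => ε * f₀ t y + ε ^ 2 * f₁ t y) x
      = ε * Lam (f₀ t) x + ε ^ 2 * Lam (f₁ t) x :=
    Lam_lin N ε (ε^2) (f₀ t) (f₁ t) hc0 hc1 hb0 hb1 x
  -- Hop value of the combination
  have hHv : Hop (fun z => ε * f₀ t z + ε ^ 2 * f₁ t z) x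
      = ε * Hop (f₀ t) x + ε ^ 2 * Hop (f₁ t) x :=
    Hop_lin N ε (ε^2) (f₀ t) (f₁ t) hc0 hc1 hb0 hb1 x
  -- derivative of the product
  have hup : HasDerivAt (fun y => ε * f₀ t y + ε ^ 2 * f₁ t y)
      (ε * deriv (f₀ t) x + ε ^ 2 * deriv (f₁ t) x) x :=
    (hd0x.const_mul ε).add (hd1x.const_mul (ε^2))
  have hH : HasDerivAt (Hop (fun z => ε * f₀ t z + ε ^ 2 * f₁ t z))
      (Lam (fun y => ε * f₀ t y + ε ^ 2 * f₁ t y) x) x :=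
    hop_hasDerivAt N _ hbu x
  have hP : deriv (fun y =>
        Hop (fun z => ε * f₀ t z + ε ^ 2 * f₁ t z) y * (ε * f₀ t y + ε ^ 2 * f₁ t y)) x
      = Lam (fun y => ε * f₀ t y + ε ^ 2 * f₁ t y) x * (ε * f₀ t x + ε ^ 2 * f₁ t x)
        + Hop (fun z => ε * f₀ t z + ε ^ 2 * f₁ t z) x
          * (ε * deriv (f₀ t) x + ε ^ 2 * deriv (f₁ t) x) :=
    (hH.mul hup).deriv
  -- derivative of the right hand side
  have hH0 : HasDerivAt (Hop (f₀ t)) (Lam (f₀ t) x) x := hop_hasDerivAt N _ hb0 x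
  have hH1 : HasDerivAt (Hop (f₁ t)) (Lam (f₁ t) x) x := hop_hasDerivAt N _ hb1 x
  have hR : deriv (fun y =>
        Hop (f₀ t) y * f₁ t y + Hop (f₁ t) y * f₀ t y + ε * (Hop (f₁ t) y * f₁ t y)) x
      = (Lam (f₀ t) x * f₁ t x + Hop (f₀ t) x * deriv (f₁ t) x
          + (Lam (f₁ t) x * f₀ t x + Hop (f₁ t) x * deriv (f₀ t) x))
        + ε * (Lam (f₁ t) x * f₁ t x + Hop (f₁ t) x * deriv (f₁ t) x) :=
    (((hH0.mul hd1x).add (hH1.mul hd0x)).add ((hH1.mul hd1x).const_mul ε)).deriv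
  rw [hT, hP, hR, hL, hHv]
  have e0 := h₀ t x
  have e1 := h₁ t x
  have eA : deriv (fun s => f₀ s x) t = -(1/c) * Lam (f₀ t) x := by linarith
  have eB : deriv (fun s => f₁ s x) t
      = (Lam (f₀ t) x * f₀ t x + Hop (f₀ t) x * deriv (f₀ t) x - c * Lam (f₁ t) x) / c ^ 2 := by
    rw [eA] at e1
    have h2 : 2 * c * (-(1/c) * Lam (f₀ t) x) * f₀ t x = -2 * Lam (f₀ t) x * f₀ t x := by
      field_simp
    rw [eq_div_iff (pow_ne_zero 2 hcne)]
    linarith [e1, h2]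
  rw [eA, eB]
  field_simp
  ring
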